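/- Let (Ω, P) be a probability space, N a natural number, and σ_0, …, σ_{N−1} : Ω → ℝ square-integrable random variables satisfying E[σ_n σ_m] = λ_n δ_{nm} for all n, m < N, where λ_n ∈ ℝ. Let d₁, d₂ be positive integers and ψ_n ∈ L²(ℝ^{d₁}, ℂ), φ_n ∈ L²(ℝ^{d₂}, ℂ) for n < N (with respect to Lebesgue measure). Define K(ω, a, b) := Σ_{n<N} σ_n(ω) ψ_n(a) φ_n(b). Then for all shifts Δa ∈ ℝ^{d₁} and Δb ∈ ℝ^{d₂}: ∬ E[ conj(K(·, a − Δa, b − Δb)) · K(·, a, b) ] da db = Σ_{n<N} λ_n · (∫ conj(ψ_n(a − Δa)) ψ_n(a) da) · (∫ conj(φ_n(b − Δb)) φ_n(b) db). -/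

import Mathlib

/-! Expanding the product of the two sums, uncorrelatedness kills the cross terms of the
expectation, leaving `Σ λₙ Fₙ(a) Gₙ(b)`; Fubini for product integrands then splits the double
integral. Each factor is integrable by Cauchy–Schwarz, since translation preserves Lebesgue
measure and hence `L²`. -/

open MeasureTheory ComplexConjugate

section

variable {𝕜 : Type*} [RCLike 𝕜]

theorem MeasureTheory.MemLp.integrable_conj_mul {α : Type*} [MeasurableSpace α] {μ : Measure α}
    {f g : α → 𝕜} (hf : MemLp f 2 μ) (hg : MemLp g 2 μ) :
    Integrable (fun x => conj (f x) * g x) μ :=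
  hf.star.integrable_mul hg

theorem integrable_conj_comp_sub_mul {G : Type*} [AddGroup G] [MeasurableSpace G]
    [MeasurableAdd G] {μ : Measure G} [μ.IsAddRightInvariant] {f : G → 𝕜} (hf : MemLp f 2 μ)
    (Δ : G) : Integrable (fun a => conj (f (a - Δ)) * f a) μ :=
  (hf.comp_measurePreserving (measurePreserving_sub_right μ Δ)).integrable_conj_mul hf

theorem integral_prod_sum_mul {α β ι : Type*} [MeasurableSpace α] [MeasurableSpace β]
    {μ : Measure α} {ν : Measure β} [SFinite μ] [SFinite ν] (s : Finset ι) (c : ι → 𝕜)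
    {f : ι → α → 𝕜} {g : ι → β → 𝕜} (hf : ∀ n ∈ s, Integrable (f n) μ)
    (hg : ∀ n ∈ s, Integrable (g n) ν) :
    ∫ z, ∑ n ∈ s, c n * (f n z.1 * g n z.2) ∂μ.prod ν
      = ∑ n ∈ s, c n * (∫ x, f n x ∂μ) * ∫ y, g n y ∂ν := by
  rw [integral_finsetSum s fun n hn => ((hf n hn).mul_prod (hg n hn)).const_mul (c n)]
  refine Finset.sum_congr rfl fun n _ => ?_
  rw [integral_const_mul, integral_prod_mul (f n) (g n), mul_assoc]

end

theorem integral_conj_sum_mul_sum_of_uncorrelated {Ω ι : Type*} [MeasurableSpace Ω]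
    {μ : Measure Ω} [Fintype ι] [DecidableEq ι] {σ : ι → Ω → ℝ} {lam : ι → ℝ}
    (hσ : ∀ n, MemLp (σ n) 2 μ)
    (huncorr : ∀ n m, ∫ ω, σ n ω * σ m ω ∂μ = if n = m then lam n else 0) (c d : ι → ℂ) :
    ∫ ω, conj (∑ n, (σ n ω : ℂ) * c n) * ∑ n, (σ n ω : ℂ) * d n ∂μ
      = ∑ n, (lam n : ℂ) * (conj (c n) * d n) := by
  have hexpand : ∀ ω, conj (∑ n, (σ n ω : ℂ) * c n) * ∑ n, (σ n ω : ℂ) * d n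
      = ∑ n, ∑ m, ((σ n ω * σ m ω : ℝ) : ℂ) * (conj (c n) * d m) := by
    intro ω
    rw [map_sum, Finset.sum_mul_sum]
    refine Finset.sum_congr rfl fun n _ => Finset.sum_congr rfl fun m _ => ?_
    simp only [map_mul, Complex.conj_ofReal, Complex.ofReal_mul]
    ring
  have hint : ∀ n m, Integrable (fun ω => ((σ n ω * σ m ω : ℝ) : ℂ) * (conj (c n) * d m)) μ :=
    fun n m => (((hσ n).integrable_mul (hσ m)).ofReal (𝕜 := ℂ)).mul_const _
  have hterm : ∀ n m, ∫ ω, ((σ n ω * σ m ω : ℝ) : ℂ) * (conj (c n) * d m) ∂μ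
      = ((if n = m then lam n else 0 : ℝ) : ℂ) * (conj (c n) * d m) := by
    intro n m
    rw [integral_mul_const, integral_complex_ofReal, huncorr]
  simp_rw [hexpand]
  rw [integral_finsetSum _ fun n _ => integrable_finsetSum _ fun m _ => hint n m]
  refine Finset.sum_congr rfl fun n _ => ?_
  rw [integral_finsetSum _ fun m _ => hint n m]
  simp only [hterm, apply_ite Complex.ofReal, Complex.ofReal_zero, ite_mul, zero_mul,
    Finset.sum_ite_eq, Finset.mem_univ, if_true]

theorem channel_correlation_function_identity_general
    {Ω : Type*} [MeasurableSpace Ω] (P : Measure Ω)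
    (N : ℕ) (σ : Fin N → Ω → ℝ) (lam : Fin N → ℝ)
    (hL2 : ∀ n, MemLp (σ n) 2 P)
    (huncorr : ∀ n m : Fin N, ∫ ω, σ n ω * σ m ω ∂P = if n = m then lam n else 0)
    (d₁ d₂ : ℕ)
    (ψ : Fin N → Lp ℂ 2 (volume : Measure (Fin d₁ → ℝ)))
    (φ : Fin N → Lp ℂ 2 (volume : Measure (Fin d₂ → ℝ))) :
    ∀ (Δa : Fin d₁ → ℝ) (Δb : Fin d₂ → ℝ),
      ∫ z : (Fin d₁ → ℝ) × (Fin d₂ → ℝ),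
          (∫ ω, (starRingEnd ℂ)
                (∑ n : Fin N, (σ n ω : ℂ) * ψ n (z.1 - Δa) * φ n (z.2 - Δb))
              * (∑ n : Fin N, (σ n ω : ℂ) * ψ n z.1 * φ n z.2) ∂P)
        = ∑ n : Fin N, (lam n : ℂ)
            * (∫ a, (starRingEnd ℂ) (ψ n (a - Δa)) * ψ n a)
            * (∫ b, (starRingEnd ℂ) (φ n (b - Δb)) * φ n b) := by
  intro Δa Δb
  have hexpectation : ∀ z : (Fin d₁ → ℝ) × (Fin d₂ → ℝ),
      ∫ ω, conj (∑ n, (σ n ω : ℂ) * ψ n (z.1 - Δa) * φ n (z.2 - Δb))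
          * ∑ n, (σ n ω : ℂ) * ψ n z.1 * φ n z.2 ∂P
        = ∑ n, (lam n : ℂ) * ((conj (ψ n (z.1 - Δa)) * ψ n z.1)
            * (conj (φ n (z.2 - Δb)) * φ n z.2)) := by
    intro z
    simp_rw [mul_assoc (σ _ _ : ℂ)]
    rw [integral_conj_sum_mul_sum_of_uncorrelated hL2 huncorr]
    refine Finset.sum_congr rfl fun n _ => ?_
    rw [map_mul]
    ring
  simp_rw [hexpectation]
  rw [Measure.volume_eq_prod]
  exact integral_prod_sum_mul _ _ (f := fun n a => conj (ψ n (a - Δa)) * ψ n a)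
    (g := fun n b => conj (φ n (b - Δb)) * φ n b)
    (fun n _ => integrable_conj_comp_sub_mul (Lp.memLp (ψ n)) Δa)
    fun n _ => integrable_conj_comp_sub_mul (Lp.memLp (φ n)) Δb

/-- Channel correlation function identity (Corollary 1, CCF row): for a random
kernel `K(ω,a,b) = Σ_{n<N} σ_n(ω) ψ_n(a) φ_n(b)` with uncorrelated
square-integrable real coefficients `E[σ_n σ_m] = λ_n δ_{nm}` and
`ψ_n ∈ L²(ℝ^{d₁})`, `φ_n ∈ L²(ℝ^{d₂})`, the shifted correlation factorizes as
`∬ E[conj(K(·, a−Δa, b−Δb)) K(·,a,b)] da db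
  = Σ_n λ_n (∫ conj(ψ_n(a−Δa)) ψ_n(a) da) (∫ conj(φ_n(b−Δb)) φ_n(b) db)`. -/
theorem channel_correlation_function_identity
    {Ω : Type*} [MeasurableSpace Ω] (P : Measure Ω) [IsProbabilityMeasure P]
    (N : ℕ) (σ : Fin N → Ω → ℝ) (lam : Fin N → ℝ)
    (hL2 : ∀ n, MemLp (σ n) 2 P)
    (huncorr : ∀ n m : Fin N, ∫ ω, σ n ω * σ m ω ∂P = if n = m then lam n else 0)
    (d₁ d₂ : ℕ) (hd₁ : 0 < d₁) (hd₂ : 0 < d₂)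
    (ψ : Fin N → Lp ℂ 2 (volume : Measure (Fin d₁ → ℝ)))
    (φ : Fin N → Lp ℂ 2 (volume : Measure (Fin d₂ → ℝ))) :
    ∀ (Δa : Fin d₁ → ℝ) (Δb : Fin d₂ → ℝ),
      ∫ z : (Fin d₁ → ℝ) × (Fin d₂ → ℝ),
          (∫ ω, (starRingEnd ℂ)
                (∑ n : Fin N, (σ n ω : ℂ) * ψ n (z.1 - Δa) * φ n (z.2 - Δb))
              * (∑ n : Fin N, (σ n ω : ℂ) * ψ n z.1 * φ n z.2) ∂P)
        = ∑ n : Fin N, (lam n : ℂ)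
            * (∫ a, (starRingEnd ℂ) (ψ n (a - Δa)) * ψ n a)
            * (∫ b, (starRingEnd ℂ) (φ n (b - Δb)) * φ n b) :=
  channel_correlation_function_identity_general P N σ lam hL2 huncorr d₁ d₂ ψ φ
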